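/- arXiv:2004.11856 — 2 statements merged into one kernel-verified Lean document; each statement's English description precedes it below -/
import Mathlib

section
/- Positive semidefiniteness propagation in the Riccati recursion: If Q is positive semidefinite, R is positive definite, and S is symmetric positive semidefinite, then R(S) := Q + AᵀSA − AᵀSB(R + BᵀSB)⁻¹BᵀSA is symmetric positive semidefinite, and R + BᵀSB is symmetric positive definite. -/
/-!
With `G = fromCols A B`, the block matrix
`fromBlocks (Q + AᴴSA) (AᴴSB) (BᴴSA) (R + BᴴSB) = fromBlocks Q 0 0 R + Gᴴ S G`
is positive semidefinite as a sum of two such matrices, and its `(2,2)` block is positive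
definite. The Riccati map is the Schur complement of that block, hence positive semidefinite.
-/

open Matrix

namespace Matrix

lemma conjTranspose_fromCols_mul_mul_fromCols {l m n R : Type*} [CommRing R] [StarRing R]
    [Fintype l] (A : Matrix l m R) (B : Matrix l n R) (S : Matrix l l R) :
    (fromCols A B)ᴴ * S * fromCols A B =
      fromBlocks (Aᴴ * S * A) (Aᴴ * S * B) (Bᴴ * S * A) (Bᴴ * S * B) := by
  rw [conjTranspose_fromCols_eq_fromRows_conjTranspose, Matrix.mul_assoc, mul_fromCols,
    fromRows_mul_fromCols]
  simp only [Matrix.mul_assoc]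

variable {l m n K : Type*} [Field K] [PartialOrder K] [StarRing K] [StarOrderedRing K]
  [Fintype m] [Fintype n] [DecidableEq n]

lemma PosSemidef.fromBlocks_zero {Q : Matrix m m K} {D : Matrix n n K} (hQ : Q.PosSemidef)
    (hD : D.PosDef) : (fromBlocks Q 0 0 D).PosSemidef := by
  have : Invertible D := hD.isUnit.invertible
  simpa using (PosDef.fromBlocks₂₂ Q 0 hD).mpr (by simpa using hQ)

theorem PosSemidef.riccati [Fintype l] {A : Matrix l m K} {B : Matrix l n K}
    {Q : Matrix m m K} {D : Matrix n n K} {S : Matrix l l K}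
    (hQ : Q.PosSemidef) (hD : D.PosDef) (hS : S.PosSemidef) :
    (Q + Aᴴ * S * A - Aᴴ * S * B * (D + Bᴴ * S * B)⁻¹ * (Bᴴ * S * A)).PosSemidef := by
  have hM : (D + Bᴴ * S * B).PosDef := hD.add_posSemidef (hS.conjTranspose_mul_mul_same B)
  have : Invertible (D + Bᴴ * S * B) := hM.isUnit.invertible
  have hBSA : Bᴴ * S * A = (Aᴴ * S * B)ᴴ := by
    simp only [conjTranspose_mul, conjTranspose_conjTranspose, hS.1.eq, Matrix.mul_assoc]
  have hblock : (fromBlocks (Q + Aᴴ * S * A) (Aᴴ * S * B) (Bᴴ * S * A)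
      (D + Bᴴ * S * B)).PosSemidef := by
    have := (hQ.fromBlocks_zero hD).add (hS.conjTranspose_mul_mul_same (fromCols A B))
    rwa [conjTranspose_fromCols_mul_mul_fromCols, fromBlocks_add, zero_add, zero_add] at this
  rw [hBSA] at hblock ⊢
  exact (PosDef.fromBlocks₂₂ _ _ hM).mp hblock

end Matrix

/-- Positive semidefiniteness propagation in the Riccati recursion. -/
theorem stmt_12 {n m : ℕ}
    (A : Matrix (Fin n) (Fin n) ℝ) (B : Matrix (Fin n) (Fin m) ℝ)
    (Q : Matrix (Fin n) (Fin n) ℝ) (R : Matrix (Fin m) (Fin m) ℝ)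
    (S : Matrix (Fin n) (Fin n) ℝ)
    (hQ : Q.PosSemidef) (hR : R.PosDef) (hS : S.PosSemidef) :
    (Q + Aᵀ * S * A - Aᵀ * S * B * (R + Bᵀ * S * B)⁻¹ * (Bᵀ * S * A)).PosSemidef
      ∧ (R + Bᵀ * S * B).PosDef := by
  simp only [← conjTranspose_eq_transpose_of_trivial]
  exact ⟨hQ.riccati hR hS, hR.add_posSemidef (hS.conjTranspose_mul_mul_same B)⟩
end

section
/- Conditional independence of control-free stochastic states: Consider processes x₀ˢ(t+1) = A₀₀ x₀ˢ(t) + w₀(t), xᵢˢ(t+1) = Aᵢᵢ xᵢˢ(t) + Aᵢ₀ x₀ˢ(t) + wᵢ(t) for i ∈ {1,…,n}, where the initial states x₀ˢ(1), …, xₙˢ(1) and all noises {wᵢ(τ)} are mutually independent. Then for any t and any i ≠ j in {1,…,n}, the trajectories xᵢˢ(1:t) and xⱼˢ(1:t) are conditionally independent given x₀ˢ(1:t). -/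
/-!
Group the primitive variables by agent: the σ-algebras `𝓕ᵢ` generated by the
initial state and the noises of agent `i` are independent. The major trajectory `x₀(1:t)` is
`𝓕₀`-measurable, and each minor trajectory `xᵢ(1:t)` is measurable with respect to
`𝓕ᵢ ⊔ σ(x₀(1:t))`. Since `𝓕ᵢ`, `𝓕ⱼ` and `σ(x₀(1:t)) ≤ 𝓕₀` are independent, conditioning on
`σ(x₀(1:t))` leaves `𝓕ᵢ ⊔ σ(x₀(1:t))` and `𝓕ⱼ ⊔ σ(x₀(1:t))` conditionally independent.
-/

open MeasureTheory ProbabilityTheory Matrix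

/-- Index type for the primitive random variables: initial states (left) and
noise vectors (right). -/
def primIdxType {n : ℕ} (d : Fin (n + 1) → ℕ) :
    Fin (n + 1) ⊕ (Fin (n + 1) × ℕ) → Type
  | Sum.inl i => Fin (d i) → ℝ
  | Sum.inr p => Fin (d p.1) → ℝ

instance {n : ℕ} (d : Fin (n + 1) → ℕ) (j : Fin (n + 1) ⊕ (Fin (n + 1) × ℕ)) :
    MeasurableSpace (primIdxType d j) :=
  match j with
  | Sum.inl i => inferInstanceAs (MeasurableSpace (Fin (d i) → ℝ))
  | Sum.inr p => inferInstanceAs (MeasurableSpace (Fin (d p.1) → ℝ))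

section CondIndepOfIndep

variable {Ω : Type*}

lemma isPiSystem_image2_inter (m₁ m₂ : MeasurableSpace Ω) :
    IsPiSystem (Set.image2 (· ∩ ·) {s | MeasurableSet[m₁] s} {s | MeasurableSet[m₂] s}) := by
  rintro _ ⟨a, ha, c, hc, rfl⟩ _ ⟨b, hb, c', hc', rfl⟩ _
  exact ⟨a ∩ b, ha.inter hb, c ∩ c', hc.inter hc', (Set.inter_inter_inter_comm a c b c').symm⟩

lemma sup_eq_generateFrom_image2_inter (m₁ m₂ : MeasurableSpace Ω) :
    m₁ ⊔ m₂ = MeasurableSpace.generateFrom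
      (Set.image2 (· ∩ ·) {s | MeasurableSet[m₁] s} {s | MeasurableSet[m₂] s}) := by
  refine le_antisymm (sup_le ?_ ?_) (MeasurableSpace.generateFrom_le ?_)
  · exact fun s hs => MeasurableSpace.measurableSet_generateFrom
      ⟨s, hs, Set.univ, MeasurableSet.univ, Set.inter_univ s⟩
  · exact fun s hs => MeasurableSpace.measurableSet_generateFrom
      ⟨Set.univ, MeasurableSet.univ, s, hs, Set.univ_inter s⟩
  · rintro _ ⟨a, ha, c, hc, rfl⟩
    exact (le_sup_left (b := m₂) a ha).inter (le_sup_right (a := m₁) c hc)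

variable {m₁ m₂ mΩ : MeasurableSpace Ω} {μ : Measure Ω} [IsFiniteMeasure μ]

lemma condExp_inter_of_indep (h₁ : m₁ ≤ mΩ) (h₂ : m₂ ≤ mΩ) (hind : Indep m₁ m₂ μ)
    {e c : Set Ω} (he : MeasurableSet[m₁] e) (hc : MeasurableSet[m₂] c) :
    μ⟦e ∩ c | m₂⟧ =ᵐ[μ] c.indicator fun _ => μ.real e := by
  have hconst : μ⟦e | m₂⟧ =ᵐ[μ] fun _ => μ.real e := by
    rw [← integral_indicator_one (h₁ _ he)]
    exact condExp_indep_eq h₁ h₂ (stronglyMeasurable_const.indicator he) hind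
  rw [Set.inter_comm, ← Set.indicator_indicator]
  filter_upwards [condExp_indicator ((integrable_const (1 : ℝ)).indicator (h₁ _ he)) hc, hconst]
    with ω hω hωe
  rw [hω]
  by_cases hωc : ω ∈ c <;> simp [hωc, hωe]

variable [StandardBorelSpace Ω] {m₃ : MeasurableSpace Ω}

theorem condIndep_sup_of_indep (h₁ : m₁ ≤ mΩ) (h₂ : m₂ ≤ mΩ) (h₃ : m₃ ≤ mΩ)
    (h₁₂ : Indep m₁ m₂ μ) (h₁₂₃ : Indep (m₁ ⊔ m₂) m₃ μ) :
    CondIndep m₃ (m₁ ⊔ m₃) (m₂ ⊔ m₃) h₃ μ := by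
  refine CondIndepSets.condIndep (sup_le h₁ h₃) (sup_le h₂ h₃) (isPiSystem_image2_inter _ _)
    (isPiSystem_image2_inter _ _) (sup_eq_generateFrom_image2_inter _ _)
    (sup_eq_generateFrom_image2_inter _ _) ((condIndepSets_iff _ _ _ _ ?_ ?_ μ).2 ?_)
  · rintro _ ⟨a, ha, c, hc, rfl⟩; exact (h₁ _ ha).inter (h₃ _ hc)
  · rintro _ ⟨b, hb, c, hc, rfl⟩; exact (h₂ _ hb).inter (h₃ _ hc)
  rintro _ _ ⟨a, ha, c, hc, rfl⟩ ⟨b, hb, c', hc', rfl⟩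
  have hle₁ : m₁ ≤ m₁ ⊔ m₂ := le_sup_left
  have hle₂ : m₂ ≤ m₁ ⊔ m₂ := le_sup_right
  have hsup := sup_le h₁ h₂
  -- Given `m₃`, the generator `a ∩ c` has conditional probability `μ a` on `c` and `0` off it,
  -- so the product rule reduces to `μ (a ∩ b) = μ a * μ b`.
  rw [Set.inter_inter_inter_comm]
  filter_upwards
    [condExp_inter_of_indep hsup h₃ h₁₂₃ ((hle₁ _ ha).inter (hle₂ _ hb)) (hc.inter hc'),
    condExp_inter_of_indep hsup h₃ h₁₂₃ (hle₁ _ ha) hc,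
    condExp_inter_of_indep hsup h₃ h₁₂₃ (hle₂ _ hb) hc'] with ω hab hac hbc'
  rw [Pi.mul_apply, hab, hac, hbc', ← Set.inter_indicator_mul, measureReal_def,
    (Indep_iff _ _ _).mp h₁₂ a b ha hb, ENNReal.toReal_mul]
  rfl

end CondIndepOfIndep

lemma Matrix.measurable_mulVec {m n : Type*} [Fintype m] [Fintype n] (A : Matrix m n ℝ) :
    Measurable (A *ᵥ ·) :=
  (continuous_const.matrix_mulVec continuous_id).measurable

lemma Measurable.of_eq_add {Ω G : Type*} {mΩ : MeasurableSpace Ω} [AddCommGroup G]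
    [MeasurableSpace G] [MeasurableSub₂ G] {f g e : Ω → G} (h : f = fun ω => g ω + e ω)
    (hf : Measurable f) (hg : Measurable g) : Measurable e := by
  have he : e = fun ω => f ω - g ω := by subst h; simp
  exact he ▸ hf.sub hg

section Trajectory

variable {Ω E : Type*} [MeasurableSpace E]

def traj (x : ℕ → Ω → E) (t : ℕ) : Ω → Fin t → E := fun ω τ => x (τ + 1) ω

lemma comap_traj_le {m : MeasurableSpace Ω} {x : ℕ → Ω → E} {t : ℕ}
    (h : ∀ τ < t, Measurable[m] (x (τ + 1))) :
    MeasurableSpace.comap (traj x t) inferInstance ≤ m :=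
  (measurable_pi_lambda _ fun τ : Fin t => h τ τ.2).comap_le

lemma measurable_comap_traj (x : ℕ → Ω → E) {t τ : ℕ} (hτ : τ < t) :
    Measurable[MeasurableSpace.comap (traj x t) inferInstance] (x (τ + 1)) :=
  (measurable_pi_apply (⟨τ, hτ⟩ : Fin t)).comp (comap_measurable (traj x t))

lemma measurable_of_linear_recursion {m : MeasurableSpace Ω} {p : ℕ}
    (A : Matrix (Fin p) (Fin p) ℝ) {x e : ℕ → Ω → Fin p → ℝ} {t : ℕ}
    (hrec : ∀ τ, 1 ≤ τ → x (τ + 1) = fun ω => A *ᵥ x τ ω + e τ ω)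
    (hx : Measurable[m] (x 1)) (he : ∀ τ, τ + 1 < t → Measurable[m] (e (τ + 1))) :
    ∀ τ < t, Measurable[m] (x (τ + 1))
  | 0, _ => hx
  | τ + 1, hτ => by
    rw [hrec (τ + 1) le_add_self]
    exact ((Matrix.measurable_mulVec A).comp
      (measurable_of_linear_recursion A hrec hx he τ (by omega))).add (he τ hτ)

end Trajectory

section Agents

variable {Ω : Type*} [mΩ : MeasurableSpace Ω] {n : ℕ} {d : Fin (n + 1) → ℕ}
  (xs ws : (i : Fin (n + 1)) → ℕ → Ω → (Fin (d i) → ℝ))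

def primVar : (k : Fin (n + 1) ⊕ (Fin (n + 1) × ℕ)) → Ω → primIdxType d k
  | Sum.inl i => xs i 1
  | Sum.inr p => ws p.1 p.2

def agentOf : Fin (n + 1) ⊕ (Fin (n + 1) × ℕ) → Fin (n + 1) := Sum.elim id Prod.fst

/-- The meet with `mΩ` makes this a sub-σ-algebra even though the noises `wᵢ(0)`, which never
enter the dynamics, need not be measurable. -/
@[reducible]
def agentsSigma (S : Set (Fin (n + 1))) : MeasurableSpace Ω :=
  ⨆ k ∈ agentOf ⁻¹' S, MeasurableSpace.comap (primVar xs ws k) inferInstance ⊓ mΩ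

variable {xs ws}

lemma agentsSigma_le (S : Set (Fin (n + 1))) : agentsSigma xs ws S ≤ mΩ :=
  iSup₂_le fun _ _ => inf_le_right

lemma agentsSigma_union (S T : Set (Fin (n + 1))) :
    agentsSigma xs ws (S ∪ T) = agentsSigma xs ws S ⊔ agentsSigma xs ws T := by
  simp only [agentsSigma, Set.preimage_union, iSup_union]

lemma indep_agentsSigma {μ : Measure Ω} (h : iIndepFun (primVar xs ws) μ)
    {S T : Set (Fin (n + 1))} (hST : Disjoint S T) :
    Indep (agentsSigma xs ws S) (agentsSigma xs ws T) μ :=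
  indep_iSup_of_disjoint (fun _ => inf_le_right)
    (iIndep_of_iIndep_of_le ((iIndepFun_iff_iIndep _ _ _).mp h) fun _ => inf_le_left)
    (hST.preimage agentOf)

lemma measurable_agentsSigma_primVar {k : Fin (n + 1) ⊕ (Fin (n + 1) × ℕ)}
    (hk : Measurable (primVar xs ws k)) {S : Set (Fin (n + 1))} (hkS : agentOf k ∈ S) :
    Measurable[agentsSigma xs ws S] (primVar xs ws k) :=
  Measurable.of_comap_le <| (le_inf le_rfl hk.comap_le).trans <|
    le_iSup₂ (f := fun k _ => MeasurableSpace.comap (primVar xs ws k) inferInstance ⊓ mΩ) k hkS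

lemma measurable_agentsSigma_initial {i : Fin (n + 1)} (hx : Measurable (xs i 1)) :
    Measurable[agentsSigma xs ws {i}] (xs i 1) :=
  measurable_agentsSigma_primVar (k := .inl i) hx rfl

lemma measurable_agentsSigma_noise {i : Fin (n + 1)} {τ : ℕ} (hw : Measurable (ws i τ)) :
    Measurable[agentsSigma xs ws {i}] (ws i τ) :=
  measurable_agentsSigma_primVar (k := .inr (i, τ)) hw rfl

lemma measurable_noise (hmeas : ∀ i τ, Measurable (xs i τ))
    {A00 : Matrix (Fin (d 0)) (Fin (d 0)) ℝ}
    {Aii : (i : Fin (n + 1)) → Matrix (Fin (d i)) (Fin (d i)) ℝ}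
    {Ai0 : (i : Fin (n + 1)) → Matrix (Fin (d i)) (Fin (d 0)) ℝ}
    (hrec0 : ∀ τ : ℕ, 1 ≤ τ → xs 0 (τ + 1) = fun ω => A00 *ᵥ xs 0 τ ω + ws 0 τ ω)
    (hreci : ∀ i : Fin (n + 1), i ≠ 0 → ∀ τ : ℕ, 1 ≤ τ →
      xs i (τ + 1) = fun ω => Aii i *ᵥ xs i τ ω + Ai0 i *ᵥ xs 0 τ ω + ws i τ ω)
    (i : Fin (n + 1)) (τ : ℕ) (hτ : 1 ≤ τ) : Measurable (ws i τ) := by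
  obtain rfl | hi := eq_or_ne i 0
  · exact Measurable.of_eq_add (hrec0 τ hτ) (hmeas _ _)
      ((Matrix.measurable_mulVec A00).comp (hmeas _ _))
  · exact Measurable.of_eq_add (hreci i hi τ hτ) (hmeas _ _)
      (((Matrix.measurable_mulVec _).comp (hmeas _ _)).add
        ((Matrix.measurable_mulVec _).comp (hmeas _ _)))

lemma comap_traj_major_le (A : Matrix (Fin (d 0)) (Fin (d 0)) ℝ)
    (hrec : ∀ τ : ℕ, 1 ≤ τ → xs 0 (τ + 1) = fun ω => A *ᵥ xs 0 τ ω + ws 0 τ ω)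
    (hx : Measurable (xs 0 1)) (hw : ∀ τ, 1 ≤ τ → Measurable (ws 0 τ)) (t : ℕ) :
    MeasurableSpace.comap (traj (xs 0) t) inferInstance ≤ agentsSigma xs ws {0} :=
  comap_traj_le <| measurable_of_linear_recursion A hrec
    (measurable_agentsSigma_initial hx) fun _ _ => measurable_agentsSigma_noise (hw _ le_add_self)

lemma comap_traj_minor_le {i : Fin (n + 1)} (A : Matrix (Fin (d i)) (Fin (d i)) ℝ)
    (B : Matrix (Fin (d i)) (Fin (d 0)) ℝ)
    (hrec : ∀ τ : ℕ, 1 ≤ τ →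
      xs i (τ + 1) = fun ω => A *ᵥ xs i τ ω + B *ᵥ xs 0 τ ω + ws i τ ω)
    (hx : Measurable (xs i 1)) (hw : ∀ τ, 1 ≤ τ → Measurable (ws i τ)) (t : ℕ) :
    MeasurableSpace.comap (traj (xs i) t) inferInstance ≤
      agentsSigma xs ws {i} ⊔ MeasurableSpace.comap (traj (xs 0) t) inferInstance := by
  refine comap_traj_le <| measurable_of_linear_recursion A
    (e := fun τ ω => B *ᵥ xs 0 τ ω + ws i τ ω)
    (fun τ hτ => (hrec τ hτ).trans (funext fun _ => add_assoc _ _ _))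
    ((measurable_agentsSigma_initial hx).mono le_sup_left le_rfl) fun τ hτ => ?_
  refine ((Matrix.measurable_mulVec B).comp ?_).add ?_
  · exact (measurable_comap_traj (xs 0) (Nat.lt_of_succ_lt hτ)).mono le_sup_right le_rfl
  · exact (measurable_agentsSigma_noise (hw _ le_add_self)).mono le_sup_left le_rfl

end Agents

/-- Conditional independence of the control-free stochastic states of two
distinct minor agents given the trajectory of the major agent's state. -/
theorem stmt_17 {Ω : Type*} {mΩ : MeasurableSpace Ω} [StandardBorelSpace Ω]
    {μ : Measure Ω} [IsProbabilityMeasure μ]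
    {n : ℕ} (d : Fin (n + 1) → ℕ)
    (xs : (i : Fin (n + 1)) → ℕ → Ω → (Fin (d i) → ℝ))
    (ws : (i : Fin (n + 1)) → ℕ → Ω → (Fin (d i) → ℝ))
    (hmeas : ∀ i τ, Measurable (xs i τ))
    (A00 : Matrix (Fin (d 0)) (Fin (d 0)) ℝ)
    (Aii : (i : Fin (n + 1)) → Matrix (Fin (d i)) (Fin (d i)) ℝ)
    (Ai0 : (i : Fin (n + 1)) → Matrix (Fin (d i)) (Fin (d 0)) ℝ)
    (hrec0 : ∀ τ : ℕ, 1 ≤ τ →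
      xs 0 (τ + 1) = fun ω => A00.mulVec (xs 0 τ ω) + ws 0 τ ω)
    (hreci : ∀ i : Fin (n + 1), i ≠ 0 → ∀ τ : ℕ, 1 ≤ τ →
      xs i (τ + 1) = fun ω =>
        (Aii i).mulVec (xs i τ ω) + (Ai0 i).mulVec (xs 0 τ ω) + ws i τ ω)
    (hindep : iIndepFun (β := primIdxType d) (m := fun j => inferInstance)
      (fun j : Fin (n + 1) ⊕ (Fin (n + 1) × ℕ) =>
        match j with
        | Sum.inl i => xs i 1
        | Sum.inr p => ws p.1 p.2) μ)
    (t : ℕ)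
    (hm : MeasurableSpace.comap
        (fun ω => fun τ : Fin t => xs 0 ((τ : ℕ) + 1) ω) inferInstance ≤ mΩ) :
    ∀ i j : Fin (n + 1), i ≠ 0 → j ≠ 0 → i ≠ j →
      CondIndepFun
        (MeasurableSpace.comap
          (fun ω => fun τ : Fin t => xs 0 ((τ : ℕ) + 1) ω) inferInstance) hm
        (fun ω => fun τ : Fin t => xs i ((τ : ℕ) + 1) ω)
        (fun ω => fun τ : Fin t => xs j ((τ : ℕ) + 1) ω) μ := by
  intro i j hi hj hij
  have hw := measurable_noise hmeas hrec0 hreci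
  have hminor (k : Fin (n + 1)) (hk : k ≠ 0) :=
    comap_traj_minor_le (Aii k) (Ai0 k) (hreci k hk) (hmeas k 1) (hw k) t
  have hij_indep := indep_agentsSigma hindep (Set.disjoint_singleton.2 hij)
  have hmajor_indep : Indep (agentsSigma xs ws {i} ⊔ agentsSigma xs ws {j})
      (MeasurableSpace.comap (traj (xs 0) t) inferInstance) μ := by
    rw [← agentsSigma_union]
    exact indep_of_indep_of_le_right
      (indep_agentsSigma hindep (Set.disjoint_singleton_right.2 (by simp [hi.symm, hj.symm])))
      (comap_traj_major_le A00 hrec0 (hmeas 0 1) (hw 0) t)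
  rw [condIndepFun_iff_condIndep]
  exact condIndep_of_condIndep_of_le_right (condIndep_of_condIndep_of_le_left
    (condIndep_sup_of_indep (agentsSigma_le _) (agentsSigma_le _) hm hij_indep hmajor_indep)
    (hminor i hi)) (hminor j hj)
end
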